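/- Let Σ and Σ₀ be symmetric positive definite n×n matrices and T > 0. Define G(t) = (Σ + Σ₀t)⁻¹Σ₀ for t ∈ [0,T]. Then the matrix-valued function M(t) = Σ₀⁻¹ + Σ⁻¹t − [ (Σ₀⁻¹ + Σ⁻¹T)⁻¹ + 2∫_t^T Σ₀(Σ + Σ₀s)⁻¹Σ(Σ + Σ₀s)⁻¹Σ₀ ds ]⁻¹ satisfies M(T) = 0 and the Riccati ODE −M'(t) − 2M(t)ᵀG(t)ᵀΣG(t)M(t) + 4G(t)M(t) − Σ⁻¹ = 0 on [0,T]. -/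

import Mathlib

open Matrix intervalIntegral

attribute [local instance] Matrix.normedAddCommGroup Matrix.normedSpace

noncomputable def stmt14G (n : ℕ) (Sig Sig₀ : Matrix (Fin n) (Fin n) ℝ) (t : ℝ) :
    Matrix (Fin n) (Fin n) ℝ :=
  (Sig + t • Sig₀)⁻¹ * Sig₀

noncomputable def stmt14M (n : ℕ) (Sig Sig₀ : Matrix (Fin n) (Fin n) ℝ) (T t : ℝ) :
    Matrix (Fin n) (Fin n) ℝ :=
  Sig₀⁻¹ + t • Sig⁻¹ -
    ((Sig₀⁻¹ + T • Sig⁻¹)⁻¹ +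
      (2:ℝ) • ∫ s in t..T,
        Sig₀ * (Sig + s • Sig₀)⁻¹ * Sig * (Sig + s • Sig₀)⁻¹ * Sig₀)⁻¹

/-!
Write `M̂(s) = Σ₀⁻¹ + sΣ⁻¹` and `K = M̂⁻¹`. Both `Σ₀(Σ + sΣ₀)⁻¹Σ` and `Σ(Σ + sΣ₀)⁻¹Σ₀` equal
`K(s)`, so the integrand is `KΣ⁻¹K = -K'`, the bracket in `M(t)` is `Θ(t) = 2K(t) - K(T)`, and
`M = M̂ - Θ⁻¹`; likewise `G = Σ⁻¹K` and `Gᵀ = KΣ⁻¹`. On `[0, T]` the factorisation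
`Θ(t) = K(t) M̂(2T - t) K(T)` shows that `Θ` is invertible. Expanding `M̂(a) Σ M̂(b)` shows that
`K(a)Σ⁻¹K(b)` is symmetric in `a, b`, whence `ΘG = GᵀΘ`; with this commutation the Riccati
equation for `M̂ - Θ⁻¹` reduces to `Θ' = -2KΣ⁻¹K` by ring manipulations.
-/

section MatrixCalculus

variable {𝕜 : Type*} [NontriviallyNormedField 𝕜] {m : Type*} [Fintype m] [DecidableEq m]

theorem HasDerivAt.matrix_inv {A : 𝕜 → Matrix m m 𝕜} {A' : Matrix m m 𝕜}
    {t : 𝕜} (hA : HasDerivAt A A' t) (ht : IsUnit (A t).det) :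
    HasDerivAt (fun s => (A s)⁻¹) (-((A t)⁻¹ * A' * (A t)⁻¹)) t := by
  have hdet : ∀ᶠ s in nhds t, IsUnit (A s).det := by
    filter_upwards [(continuous_id.matrix_det.continuousAt.comp hA.continuousAt).eventually_ne
      ht.ne_zero] with s hs using hs.isUnit
  have hinv : ContinuousAt (fun s => (A s)⁻¹) t :=
    (continuousAt_matrix_inv (A t) (by
      rw [Ring.inverse_eq_inv']; exact continuousAt_inv₀ ht.ne_zero)).comp hA.continuousAt
  refine hasDerivAt_iff_tendsto_slope.mpr ?_
  have key := (((hinv.mono_left nhdsWithin_le_nhds).mul (hasDerivAt_iff_tendsto_slope.mp hA)).mul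
    (tendsto_const_nhds (x := (A t)⁻¹))).neg
  refine key.congr' ?_
  filter_upwards [self_mem_nhdsWithin, hdet.filter_mono nhdsWithin_le_nhds] with s hs hus
  have hsub : (A s)⁻¹ - (A t)⁻¹ = (A s)⁻¹ * (A t - A s) * (A t)⁻¹ := by
    rw [Matrix.mul_sub, Matrix.sub_mul, Matrix.mul_assoc, mul_nonsing_inv _ ht, Matrix.mul_one,
      nonsing_inv_mul _ hus, Matrix.one_mul]
  simp only [slope_def_module, hsub, mul_smul_comm, smul_mul_assoc, ← smul_neg]
  congr 1
  noncomm_ring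

end MatrixCalculus

namespace RiccatiSolution

section General

variable {m : Type*} [Fintype m] [DecidableEq m] {Sig Sig₀ : Matrix m m ℝ}

noncomputable def mHat (Sig Sig₀ : Matrix m m ℝ) (s : ℝ) : Matrix m m ℝ := Sig₀⁻¹ + s • Sig⁻¹

theorem mHat_eq_left (hS : IsUnit Sig.det) (hS₀ : IsUnit Sig₀.det) (s : ℝ) :
    mHat Sig Sig₀ s = Sig⁻¹ * (Sig + s • Sig₀) * Sig₀⁻¹ := by
  rw [mHat, Matrix.mul_add, Matrix.add_mul, nonsing_inv_mul _ hS, Matrix.one_mul,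
    Matrix.mul_smul, Matrix.smul_mul, Matrix.mul_assoc, mul_nonsing_inv _ hS₀, Matrix.mul_one,
    add_comm]

theorem mHat_eq_right (hS : IsUnit Sig.det) (hS₀ : IsUnit Sig₀.det) (s : ℝ) :
    mHat Sig Sig₀ s = Sig₀⁻¹ * (Sig + s • Sig₀) * Sig⁻¹ := by
  rw [mHat, Matrix.mul_add, Matrix.add_mul, Matrix.mul_assoc, mul_nonsing_inv _ hS,
    Matrix.mul_one, Matrix.mul_smul, Matrix.smul_mul, nonsing_inv_mul _ hS₀, Matrix.one_mul]

theorem mHat_inv_eq_left (hS : IsUnit Sig.det) (hS₀ : IsUnit Sig₀.det) (s : ℝ) :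
    (mHat Sig Sig₀ s)⁻¹ = Sig₀ * (Sig + s • Sig₀)⁻¹ * Sig := by
  rw [mHat_eq_left hS hS₀, Matrix.mul_inv_rev, Matrix.mul_inv_rev,
    nonsing_inv_nonsing_inv _ hS, nonsing_inv_nonsing_inv _ hS₀, Matrix.mul_assoc]

theorem mHat_inv_eq_right (hS : IsUnit Sig.det) (hS₀ : IsUnit Sig₀.det) (s : ℝ) :
    (mHat Sig Sig₀ s)⁻¹ = Sig * (Sig + s • Sig₀)⁻¹ * Sig₀ := by
  rw [mHat_eq_right hS hS₀, Matrix.mul_inv_rev, Matrix.mul_inv_rev,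
    nonsing_inv_nonsing_inv _ hS, nonsing_inv_nonsing_inv _ hS₀, Matrix.mul_assoc]

theorem integrand_eq_mHat_inv_mul_inv_mul (hS : IsUnit Sig.det) (hS₀ : IsUnit Sig₀.det)
    (s : ℝ) :
    Sig₀ * (Sig + s • Sig₀)⁻¹ * Sig * (Sig + s • Sig₀)⁻¹ * Sig₀ =
      (mHat Sig Sig₀ s)⁻¹ * Sig⁻¹ * (mHat Sig Sig₀ s)⁻¹ := by
  calc _ = Sig₀ * (Sig + s • Sig₀)⁻¹ * Sig * Sig⁻¹ * (Sig * (Sig + s • Sig₀)⁻¹ * Sig₀) := by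
        simp only [Matrix.mul_assoc, nonsing_inv_mul_cancel_left _ _ hS]
    _ = _ := by rw [← mHat_inv_eq_left hS hS₀, ← mHat_inv_eq_right hS hS₀]

theorem mHat_isSymm (hS : Sig.IsSymm) (hS₀ : Sig₀.IsSymm) (s : ℝ) : (mHat Sig Sig₀ s).IsSymm :=
  hS₀.inv.add (hS.inv.smul s)

theorem mHat_posDef (hS : Sig.PosDef) (hS₀ : Sig₀.PosDef) {s : ℝ} (hs : 0 ≤ s) :
    (mHat Sig Sig₀ s).PosDef :=
  hS₀.inv.add_posSemidef (hS.inv.posSemidef.smul hs)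

theorem isUnit_det_mHat (hS : Sig.PosDef) (hS₀ : Sig₀.PosDef) {s : ℝ} (hs : 0 ≤ s) :
    IsUnit (mHat Sig Sig₀ s).det :=
  (mHat_posDef hS hS₀ hs).det_pos.ne'.isUnit

theorem mHat_mul_mul_comm (hS : IsUnit Sig.det) (a b : ℝ) :
    mHat Sig Sig₀ a * Sig * mHat Sig Sig₀ b = mHat Sig Sig₀ b * Sig * mHat Sig Sig₀ a := by
  simp only [mHat, Matrix.add_mul, Matrix.mul_add, Matrix.smul_mul, Matrix.mul_smul,
    nonsing_inv_mul _ hS, mul_nonsing_inv_cancel_right _ _ hS, Matrix.one_mul]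
  module

theorem mHat_inv_mul_mul_comm (hS : IsUnit Sig.det) (a b : ℝ) :
    (mHat Sig Sig₀ a)⁻¹ * Sig⁻¹ * (mHat Sig Sig₀ b)⁻¹ =
      (mHat Sig Sig₀ b)⁻¹ * Sig⁻¹ * (mHat Sig Sig₀ a)⁻¹ := by
  simpa only [Matrix.mul_inv_rev, Matrix.mul_assoc] using
    congrArg Inv.inv (mHat_mul_mul_comm (Sig₀ := Sig₀) hS b a)

theorem two_smul_mHat_inv_sub {a b : ℝ} (ha : IsUnit (mHat Sig Sig₀ a).det)
    (hb : IsUnit (mHat Sig Sig₀ b).det) :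
    (2 : ℝ) • (mHat Sig Sig₀ a)⁻¹ - (mHat Sig Sig₀ b)⁻¹ =
      (mHat Sig Sig₀ a)⁻¹ * mHat Sig Sig₀ (2 * b - a) * (mHat Sig Sig₀ b)⁻¹ := by
  have : mHat Sig Sig₀ (2 * b - a) = (2 : ℝ) • mHat Sig Sig₀ b - mHat Sig Sig₀ a := by
    simp only [mHat]
    module
  rw [this, Matrix.mul_sub, Matrix.sub_mul, Matrix.mul_smul, Matrix.smul_mul,
    mul_nonsing_inv_cancel_right _ _ hb, nonsing_inv_mul _ ha, Matrix.one_mul]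

theorem hasDerivAt_mHat (t : ℝ) : HasDerivAt (mHat Sig Sig₀) Sig⁻¹ t :=
  (((hasDerivAt_id t).smul_const Sig⁻¹).const_add Sig₀⁻¹).congr_deriv (one_smul _ _)

theorem hasDerivAt_mHat_inv {t : ℝ} (ht : IsUnit (mHat Sig Sig₀ t).det) :
    HasDerivAt (fun s => (mHat Sig Sig₀ s)⁻¹)
      (-((mHat Sig Sig₀ t)⁻¹ * Sig⁻¹ * (mHat Sig Sig₀ t)⁻¹)) t :=
  (hasDerivAt_mHat t).matrix_inv ht

theorem continuousAt_mHat_inv_mul_inv_mul {t : ℝ} (ht : IsUnit (mHat Sig Sig₀ t).det) :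
    ContinuousAt (fun s => (mHat Sig Sig₀ s)⁻¹ * Sig⁻¹ * (mHat Sig Sig₀ s)⁻¹) t :=
  have hK : ContinuousAt (fun s => (mHat Sig Sig₀ s)⁻¹) t := (hasDerivAt_mHat_inv ht).continuousAt
  (hK.mul continuousAt_const).mul hK

theorem integral_mHat_inv_mul_inv_mul {t T : ℝ}
    (h : ∀ s ∈ Set.uIcc t T, IsUnit (mHat Sig Sig₀ s).det) :
    ∫ s in t..T, (mHat Sig Sig₀ s)⁻¹ * Sig⁻¹ * (mHat Sig Sig₀ s)⁻¹ =
      (mHat Sig Sig₀ t)⁻¹ - (mHat Sig Sig₀ T)⁻¹ := by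
  rw [integral_eq_sub_of_hasDerivAt
    (fun s hs => (hasDerivAt_mHat_inv (h s hs)).neg.congr_deriv (neg_neg _))
    (ContinuousOn.intervalIntegrable fun s hs =>
      (continuousAt_mHat_inv_mul_inv_mul (h s hs)).continuousWithinAt), Pi.neg_apply,
    Pi.neg_apply, neg_sub_neg]

theorem riccati_identity {P Θ : Matrix m m ℝ} (hS : IsUnit Sig.det) (hP : IsUnit P.det)
    (hΘ : IsUnit Θ.det) (hcomm : Θ * (Sig⁻¹ * P⁻¹) = P⁻¹ * Sig⁻¹ * Θ) :
    Sig⁻¹ - (2 : ℝ) • (Θ⁻¹ * (P⁻¹ * Sig⁻¹ * P⁻¹) * Θ⁻¹) =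
      -((2 : ℝ) • ((P - Θ⁻¹) * (P⁻¹ * Sig⁻¹) * Sig * (Sig⁻¹ * P⁻¹) * (P - Θ⁻¹))) +
        (4 : ℝ) • (Sig⁻¹ * P⁻¹ * (P - Θ⁻¹)) - Sig⁻¹ := by
  have hcomm' : Sig⁻¹ * P⁻¹ * Θ⁻¹ = Θ⁻¹ * P⁻¹ * Sig⁻¹ :=
    calc Sig⁻¹ * P⁻¹ * Θ⁻¹ = Θ⁻¹ * (Θ * (Sig⁻¹ * P⁻¹)) * Θ⁻¹ := by
          rw [nonsing_inv_mul_cancel_left _ _ hΘ, Matrix.mul_assoc]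
      _ = Θ⁻¹ * P⁻¹ * Sig⁻¹ := by
          rw [hcomm, ← Matrix.mul_assoc, Matrix.mul_assoc, mul_nonsing_inv _ hΘ, Matrix.mul_one,
            Matrix.mul_assoc]
  simp only [Matrix.mul_sub, Matrix.sub_mul, ← Matrix.mul_assoc, mul_nonsing_inv _ hP,
    Matrix.one_mul, nonsing_inv_mul _ hS, nonsing_inv_mul_cancel_right _ _ hS,
    nonsing_inv_mul_cancel_right _ _ hP, hcomm']
  module

end General

variable {n : ℕ} {Sig Sig₀ : Matrix (Fin n) (Fin n) ℝ}

noncomputable def theta (Sig Sig₀ : Matrix (Fin n) (Fin n) ℝ) (T t : ℝ) :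
    Matrix (Fin n) (Fin n) ℝ :=
  (2 : ℝ) • (mHat Sig Sig₀ t)⁻¹ - (mHat Sig Sig₀ T)⁻¹

theorem stmt14M_eq_integral (hS : IsUnit Sig.det) (hS₀ : IsUnit Sig₀.det) (T : ℝ) :
    stmt14M n Sig Sig₀ T = fun t => mHat Sig Sig₀ t - ((mHat Sig Sig₀ T)⁻¹ +
      (2 : ℝ) • ∫ s in t..T, (mHat Sig Sig₀ s)⁻¹ * Sig⁻¹ * (mHat Sig Sig₀ s)⁻¹)⁻¹ := by
  funext t
  simp only [stmt14M, integrand_eq_mHat_inv_mul_inv_mul hS hS₀]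
  rfl

theorem stmt14M_apply_eq (hS : Sig.PosDef) (hS₀ : Sig₀.PosDef) {T t : ℝ} (ht : 0 ≤ t)
    (hT : 0 ≤ T) : stmt14M n Sig Sig₀ T t = mHat Sig Sig₀ t - (theta Sig Sig₀ T t)⁻¹ := by
  rw [stmt14M_eq_integral hS.det_pos.ne'.isUnit hS₀.det_pos.ne'.isUnit]
  beta_reduce
  rw [integral_mHat_inv_mul_inv_mul fun s hs => isUnit_det_mHat hS hS₀ ((le_min ht hT).trans hs.1),
    theta]
  congr 2
  module

theorem isUnit_det_theta (hS : Sig.PosDef) (hS₀ : Sig₀.PosDef) {T t : ℝ} (ht : 0 ≤ t)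
    (htT : t ≤ T) : IsUnit (theta Sig Sig₀ T t).det := by
  have hT : 0 ≤ T := ht.trans htT
  rw [theta, two_smul_mHat_inv_sub (isUnit_det_mHat hS hS₀ ht) (isUnit_det_mHat hS hS₀ hT),
    det_mul, det_mul]
  exact ((isUnit_nonsing_inv_det _ (isUnit_det_mHat hS hS₀ ht)).mul
    (isUnit_det_mHat hS hS₀ (by linarith))).mul
    (isUnit_nonsing_inv_det _ (isUnit_det_mHat hS hS₀ hT))

theorem theta_mul_comm (hS : IsUnit Sig.det) (T t : ℝ) :
    theta Sig Sig₀ T t * (Sig⁻¹ * (mHat Sig Sig₀ t)⁻¹) =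
      (mHat Sig Sig₀ t)⁻¹ * Sig⁻¹ * theta Sig Sig₀ T t := by
  simp only [theta, Matrix.sub_mul, Matrix.mul_sub, Matrix.smul_mul, Matrix.mul_smul,
    ← Matrix.mul_assoc, mHat_inv_mul_mul_comm hS T t]

theorem transpose_stmt14M (hS : Sig.PosDef) (hS₀ : Sig₀.PosDef) {T t : ℝ} (ht : 0 ≤ t)
    (hT : 0 ≤ T) : (stmt14M n Sig Sig₀ T t)ᵀ = stmt14M n Sig Sig₀ T t := by
  have hSymm := mHat_isSymm (isHermitian_iff_isSymm.mp hS.isHermitian)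
    (isHermitian_iff_isSymm.mp hS₀.isHermitian)
  rw [stmt14M_apply_eq hS hS₀ ht hT]
  exact ((hSymm t).sub (((hSymm t).inv.smul (2 : ℝ)).sub (hSymm T).inv).inv).eq

theorem stmt14G_eq (hS : IsUnit Sig.det) (hS₀ : IsUnit Sig₀.det) (t : ℝ) :
    stmt14G n Sig Sig₀ t = Sig⁻¹ * (mHat Sig Sig₀ t)⁻¹ := by
  rw [mHat_inv_eq_right hS hS₀, Matrix.mul_assoc, nonsing_inv_mul_cancel_left _ _ hS, stmt14G]

theorem transpose_stmt14G (hS : Sig.PosDef) (hS₀ : Sig₀.PosDef) (t : ℝ) :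
    (stmt14G n Sig Sig₀ t)ᵀ = (mHat Sig Sig₀ t)⁻¹ * Sig⁻¹ := by
  have hSymm := isHermitian_iff_isSymm.mp hS.isHermitian
  rw [stmt14G_eq hS.det_pos.ne'.isUnit hS₀.det_pos.ne'.isUnit, transpose_mul, hSymm.inv.eq,
    (mHat_isSymm hSymm (isHermitian_iff_isSymm.mp hS₀.isHermitian) t).inv.eq]

theorem hasDerivAt_stmt14M (hS : Sig.PosDef) (hS₀ : Sig₀.PosDef) {T t : ℝ} (ht : 0 ≤ t)
    (htT : t ≤ T) :
    HasDerivAt (stmt14M n Sig Sig₀ T) (Sig⁻¹ - (2 : ℝ) • ((theta Sig Sig₀ T t)⁻¹ *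
      ((mHat Sig Sig₀ t)⁻¹ * Sig⁻¹ * (mHat Sig Sig₀ t)⁻¹) * (theta Sig Sig₀ T t)⁻¹)) t := by
  set F := fun s => (mHat Sig Sig₀ s)⁻¹ * Sig⁻¹ * (mHat Sig Sig₀ s)⁻¹
  have hU : IsOpen {s | (mHat Sig Sig₀ s).det ≠ 0} :=
    isOpen_ne_fun (continuous_const.add (continuous_id.smul continuous_const)).matrix_det
      continuous_const
  have hF : ContinuousOn F {s | (mHat Sig Sig₀ s).det ≠ 0} := fun s hs =>
    (continuousAt_mHat_inv_mul_inv_mul (Ne.isUnit hs)).continuousWithinAt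
  have hinterval : ∀ s ∈ Set.uIcc t T, IsUnit (mHat Sig Sig₀ s).det := fun s hs =>
    isUnit_det_mHat hS hS₀ ((le_min ht (ht.trans htT)).trans hs.1)
  -- instance search does not see through the sup norm to the product topology of `Matrix`
  have : TopologicalSpace.PseudoMetrizableSpace (Matrix (Fin n) (Fin n) ℝ) :=
    inferInstanceAs (TopologicalSpace.PseudoMetrizableSpace (Fin n → Fin n → ℝ))
  have hI : HasDerivAt (fun u => ∫ s in u..T, F s) (-F t) t :=
    integral_hasDerivAt_left
      (hF.mono fun s hs => (hinterval s hs).ne_zero).intervalIntegrable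
      (hF.stronglyMeasurableAtFilter hU t (isUnit_det_mHat hS hS₀ ht).ne_zero)
      (continuousAt_mHat_inv_mul_inv_mul (isUnit_det_mHat hS hS₀ ht))
  have hB_t : (mHat Sig Sig₀ T)⁻¹ + (2 : ℝ) • ∫ s in t..T, F s = theta Sig Sig₀ T t := by
    rw [integral_mHat_inv_mul_inv_mul hinterval, theta]
    module
  have hB : HasDerivAt (fun u => (mHat Sig Sig₀ T)⁻¹ + (2 : ℝ) • ∫ s in u..T, F s)
      ((2 : ℝ) • -F t) t :=
    (hI.const_smul (2 : ℝ)).const_add (mHat Sig Sig₀ T)⁻¹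
  rw [stmt14M_eq_integral hS.det_pos.ne'.isUnit hS₀.det_pos.ne'.isUnit]
  refine ((hasDerivAt_mHat t).sub
    (hB.matrix_inv (hB_t ▸ isUnit_det_theta hS hS₀ ht htT))).congr_deriv ?_
  rw [hB_t]
  simp only [Matrix.mul_smul, Matrix.smul_mul, Matrix.mul_neg, Matrix.neg_mul, F]
  module

end RiccatiSolution

open RiccatiSolution

/-- `M` satisfies `M(T) = 0` and the Riccati ODE
`−M' − 2MᵀGᵀΣGM + 4GM − Σ⁻¹ = 0` on `[0,T]`. -/
theorem stmt14 (n : ℕ) (Sig Sig₀ : Matrix (Fin n) (Fin n) ℝ)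
    (hSig : Sig.PosDef) (hSig₀ : Sig₀.PosDef) (T : ℝ) (hT : 0 < T) :
    stmt14M n Sig Sig₀ T T = 0 ∧
    ∀ t ∈ Set.Icc (0:ℝ) T,
      HasDerivAt (stmt14M n Sig Sig₀ T)
        (-((2:ℝ) • ((stmt14M n Sig Sig₀ T t)ᵀ * (stmt14G n Sig Sig₀ t)ᵀ * Sig *
              stmt14G n Sig Sig₀ t * stmt14M n Sig Sig₀ T t))
          + (4:ℝ) • (stmt14G n Sig Sig₀ t * stmt14M n Sig Sig₀ T t) - Sig⁻¹) t := by
  have hS : IsUnit Sig.det := hSig.det_pos.ne'.isUnit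
  have hS₀ : IsUnit Sig₀.det := hSig₀.det_pos.ne'.isUnit
  refine ⟨?_, fun t ⟨ht, htT⟩ => ?_⟩
  · rw [stmt14M_apply_eq hSig hSig₀ hT.le hT.le, theta, two_smul, add_sub_cancel_right,
      nonsing_inv_nonsing_inv _ (isUnit_det_mHat hSig hSig₀ hT.le), sub_self]
  · rw [transpose_stmt14M hSig hSig₀ ht (ht.trans htT), transpose_stmt14G hSig hSig₀,
      stmt14G_eq hS hS₀, stmt14M_apply_eq hSig hSig₀ ht (ht.trans htT),
      ← riccati_identity hS (isUnit_det_mHat hSig hSig₀ ht) (isUnit_det_theta hSig hSig₀ ht htT)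
        (theta_mul_comm hS T t)]
    exact hasDerivAt_stmt14M hSig hSig₀ ht htT
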